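/- Let α ∈ (0,1), 0 < δ < 1, and K large. If u ∈ B_{K,δ} is real-valued and u ∘ T_α ∈ B_{K,δ}, then u is constant almost everywhere. In particular the cohomological equation f = u − u ∘ T_α with f, u ∈ B_{K,δ} has no solution unless f is (a.e. equal to) a constant. -/

import Mathlib

open Set MeasureTheory
open scoped ENNReal

/-- Nakada's α-continued fraction map on `[α-1, α]`. -/
noncomputable def T (α : ℝ) (x : ℝ) : ℝ :=
  if x = 0 then 0 else 1 / |x| - ⌊1 / |x| + 1 - α⌋

/-- The `(K,δ)`-norm of a function on `I_α = [α-1, α]`: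
`sup_{k ≥ K} ( k^{-δ} var_{L_k} g + ∫_{L_k} |g| )`, where
`L_k = [α-1, -1/(k+α)] ∪ [1/(k+α), α]`. -/
noncomputable def kdNorm (α : ℝ) (K : ℕ) (δ : ℝ) (g : ℝ → ℝ) : ℝ≥0∞ :=
  ⨆ k : ℕ, ⨆ _ : K ≤ k,
    (ENNReal.ofReal ((k : ℝ) ^ (-δ)) *
        (eVariationOn g (Icc (1 / (k + α)) α) + eVariationOn g (Icc (α - 1) (-(1 / (k + α))))) +
      ENNReal.ofReal (∫ x in Icc (α - 1) (-(1 / (k + α))) ∪ Icc (1 / (k + α)) α, |g x|))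

open Filter Topology

/-! For `y ∈ [α - 1, α)` and `j ≥ 1` the point `(y + j)⁻¹` lies in the `j`-th cylinder
`[1/(j + α), 1/(j + α - 1)]` and `T α` maps it back to `y`. So if `g = u ∘ T α`, then `g` takes
the values `u a` and `u b` on each of the `k - K` cylinders inside `[1/(k + α), α]`, and its
variation there is at least `(k - K) |u a - u b|`; a bound `O(k^δ)` with `δ < 1` forces
`u a = u b`. Since `T α` and its inverse branches are piecewise smooth, they pull null sets back
to null sets; this makes the argument work for almost every `a, b` when `g = u ∘ T α` only a.e.,
and turns `u = c` a.e. into `u ∘ T α = c` a.e., whence `f = u - u ∘ T α = 0` a.e. -/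

theorem eVariationOn_sub_le {ι E : Type*} [LinearOrder ι] [SeminormedAddCommGroup E]
    (f g : ι → E) (s : Set ι) :
    eVariationOn (f - g) s ≤ eVariationOn f s + eVariationOn g s := by
  refine iSup_le fun ⟨n, x, hx, hxs⟩ => ?_
  calc ∑ i ∈ Finset.range n, edist ((f - g) (x (i + 1))) ((f - g) (x i))
      ≤ ∑ i ∈ Finset.range n,
          (edist (f (x (i + 1))) (f (x i)) + edist (g (x (i + 1))) (g (x i))) := by
        refine Finset.sum_le_sum fun i _ => ?_
        simp only [Pi.sub_apply, edist_eq_enorm_sub]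
        grw [show f (x (i + 1)) - g (x (i + 1)) - (f (x i) - g (x i))
          = (f (x (i + 1)) - f (x i)) - (g (x (i + 1)) - g (x i)) by abel, enorm_sub_le]
    _ = _ := Finset.sum_add_distrib
    _ ≤ _ := add_le_add (eVariationOn.sum_le hx hxs) (eVariationOn.sum_le hx hxs)

theorem nat_mul_le_eVariationOn_Icc {ι E : Type*} [LinearOrder ι] [PseudoEMetricSpace E]
    (f : ι → E) {c : ℕ → ι} (hc : Antitone c) {d : ℝ≥0∞}
    (hd : ∀ i, ∃ x ∈ Icc (c (i + 1)) (c i), ∃ y ∈ Icc (c (i + 1)) (c i), d ≤ edist (f x) (f y))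
    (n : ℕ) : n * d ≤ eVariationOn f (Icc (c n) (c 0)) := by
  induction n with
  | zero => simp
  | succ n ih =>
    obtain ⟨x, hx, y, hy, hxy⟩ := hd n
    calc ((n + 1 : ℕ) : ℝ≥0∞) * d = d + n * d := by push_cast; ring
      _ ≤ eVariationOn f (Icc (c (n + 1)) (c n)) + eVariationOn f (Icc (c n) (c 0)) :=
          add_le_add (hxy.trans (eVariationOn.edist_le f hx hy)) ih
      _ ≤ eVariationOn f (Icc (c (n + 1)) (c n) ∪ Icc (c n) (c 0)) :=
          eVariationOn.add_le_union f fun x hx y hy => hx.2.trans hy.1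
      _ ≤ eVariationOn f (Icc (c (n + 1)) (c 0)) :=
          eVariationOn.mono f (union_subset (Icc_subset_Icc_right (hc (Nat.zero_le n)))
            (Icc_subset_Icc_left (hc n.le_succ)))

theorem nonpos_of_forall_nat_mul_le_rpow {a C δ d : ℝ} (hδ : δ < 1)
    (h : ∀ n : ℕ, n * d ≤ C * (a + n) ^ δ) : d ≤ 0 := by
  have ha : Tendsto (fun n : ℕ => a + n) atTop atTop :=
    tendsto_atTop_add_const_left _ a tendsto_natCast_atTop_atTop
  have hlhs : Tendsto (fun n : ℕ => n / (n + a) * d) atTop (𝓝 d) := by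
    simpa using (tendsto_natCast_div_add_atTop a).mul_const d
  have hrhs : Tendsto (fun n : ℕ => C * (a + n) ^ (δ - 1)) atTop (𝓝 0) := by
    simpa [neg_sub] using ((tendsto_rpow_neg_atTop (sub_pos.2 hδ)).comp ha).const_mul C
  refine le_of_tendsto_of_tendsto hlhs hrhs ?_
  filter_upwards [ha.eventually_gt_atTop 0] with n hn
  rw [Real.rpow_sub_one hn.ne', mul_div_assoc', add_comm, div_mul_eq_mul_div]
  exact div_le_div_of_nonneg_right (h n) hn.le

theorem T_of_ne_zero (α : ℝ) {x : ℝ} (hx : x ≠ 0) : T α x = |x|⁻¹ - ⌊|x|⁻¹ + 1 - α⌋ := by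
  simp [T, hx]

theorem T_mem_Ico {α x : ℝ} (hx : x ≠ 0) : T α x ∈ Ico (α - 1) α := by
  rw [T_of_ne_zero α hx]
  constructor <;> linarith [Int.floor_le (|x|⁻¹ + 1 - α), Int.lt_floor_add_one (|x|⁻¹ + 1 - α)]

theorem T_inv_add_intCast {α y : ℝ} {j : ℤ} (hy : y ∈ Ico (α - 1) α) (hj : 0 < y + j) :
    T α (y + j)⁻¹ = y := by
  have hfloor : ⌊y + j + 1 - α⌋ = j := by
    rw [Int.floor_eq_iff]; constructor <;> linarith [hy.1, hy.2]
  rw [T_of_ne_zero α (inv_ne_zero hj.ne'), abs_inv, abs_of_pos hj, inv_inv, hfloor]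
  ring

theorem Real.quasiMeasurePreserving_inv :
    Measure.QuasiMeasurePreserving (fun x : ℝ => x⁻¹) volume volume := by
  refine ⟨measurable_inv, Measure.AbsolutelyContinuous.mk fun s hs hs0 => ?_⟩
  rw [Measure.map_apply measurable_inv hs]
  have hsub : (fun x : ℝ => x⁻¹) ⁻¹' s ⊆ (fun x : ℝ => x⁻¹) '' (s \ {0}) ∪ {0} := by
    intro x hx
    by_cases hx0 : x = 0
    · exact Or.inr hx0
    · exact Or.inl ⟨x⁻¹, ⟨hx, inv_ne_zero hx0⟩, inv_inv x⟩
  refine measure_mono_null hsub (measure_union_null ?_ (measure_singleton 0))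
  exact addHaar_image_eq_zero_of_differentiableOn_of_addHaar_eq_zero volume
    (fun x hx => (differentiableAt_inv hx.2).differentiableWithinAt)
    (measure_mono_null sdiff_subset hs0)

theorem Real.quasiMeasurePreserving_abs :
    Measure.QuasiMeasurePreserving (fun x : ℝ => |x|) volume volume := by
  refine ⟨measurable_abs, Measure.AbsolutelyContinuous.mk fun s hs hs0 => ?_⟩
  rw [Measure.map_apply measurable_abs hs]
  have hsub : (fun x : ℝ => |x|) ⁻¹' s ⊆ s ∪ -s := by
    intro x hx
    rcases abs_choice x with h | h
    · exact Or.inl (by simpa [h] using hx)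
    · exact Or.inr (by simpa [h] using hx)
  exact measure_mono_null hsub (measure_union_null hs0 (by rwa [Measure.measure_neg]))

theorem ae_comp_T (α : ℝ) {p : ℝ → Prop} (h : ∀ᵐ y, p y) : ∀ᵐ x, p (T α x) := by
  have hbranch : ∀ n : ℤ, ∀ᵐ x, p (|x|⁻¹ - n) := fun n =>
    ((measurePreserving_sub_right volume (n : ℝ)).quasiMeasurePreserving.comp
      (Real.quasiMeasurePreserving_inv.comp Real.quasiMeasurePreserving_abs)).ae h
  filter_upwards [ae_all_iff.2 hbranch, Measure.ae_ne volume 0] with x hx hx0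
  rw [T_of_ne_zero α hx0]
  exact hx _

theorem ae_comp_T_of_ae_restrict {α : ℝ} {p : ℝ → Prop}
    (h : ∀ᵐ y ∂volume.restrict (Icc (α - 1) α), p y) : ∀ᵐ x, p (T α x) := by
  rw [ae_restrict_iff' measurableSet_Icc] at h
  filter_upwards [ae_comp_T α h, Measure.ae_ne volume 0] with x hx hx0
  exact hx (Ico_subset_Icc_self (T_mem_Ico hx0))

theorem ae_comp_inv_add {p : ℝ → Prop} (h : ∀ᵐ y, p y) (t : ℝ) : ∀ᵐ x, p (x + t)⁻¹ :=
  (Real.quasiMeasurePreserving_inv.comp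
    (measurePreserving_add_right volume t).quasiMeasurePreserving).ae h

theorem eVariationOn_le_kdNorm_mul (α δ : ℝ) {K k : ℕ} (hk : K ≤ k) (hk0 : k ≠ 0) (g : ℝ → ℝ) :
    eVariationOn g (Icc (1 / (k + α)) α) ≤ kdNorm α K δ g * ENNReal.ofReal ((k : ℝ) ^ δ) := by
  have hterm : ENNReal.ofReal ((k : ℝ) ^ (-δ)) * eVariationOn g (Icc (1 / (k + α)) α)
      ≤ kdNorm α K δ g :=
    le_trans (by grw [← le_self_add, ← le_self_add]) (le_iSup₂_of_le k hk le_rfl)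
  have hkpos : (0 : ℝ) < k := by positivity
  calc eVariationOn g (Icc (1 / (k + α)) α)
      = ENNReal.ofReal ((k : ℝ) ^ δ) *
          (ENNReal.ofReal ((k : ℝ) ^ (-δ)) * eVariationOn g (Icc (1 / (k + α)) α)) := by
        rw [← mul_assoc, ← ENNReal.ofReal_mul (by positivity), ← Real.rpow_add hkpos,
          add_neg_cancel, Real.rpow_zero, ENNReal.ofReal_one, one_mul]
    _ ≤ kdNorm α K δ g * ENNReal.ofReal ((k : ℝ) ^ δ) := by rw [mul_comm]; gcongr

theorem exists_ae_eq_const_of_forall_mem_eq {X β : Type*} [MeasurableSpace X] [Nonempty β]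
    {μ : Measure X} {S : Set X} {u : X → β} (hS : ∀ᵐ x ∂μ, x ∈ S)
    (hu : ∀ a ∈ S, ∀ b ∈ S, u a = u b) : ∃ c, ∀ᵐ x ∂μ, u x = c := by
  rcases S.eq_empty_or_nonempty with rfl | ⟨a, ha⟩
  · exact ⟨Classical.arbitrary β, by filter_upwards [hS] with x hx using hx.elim⟩
  · exact ⟨u a, by filter_upwards [hS] with x hx using hu x hx a ha⟩

theorem ae_forall_comp_inv_branch_eq {α : ℝ} (hα : α ∈ Ioo 0 1) {K : ℕ} (hK : 1 / α < K)
    {g u : ℝ → ℝ}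
    (hg : ∀ᵐ x ∂volume.restrict (Icc (α - 1) α), g x = u (T α x)) :
    ∀ᵐ y ∂volume.restrict (Icc (α - 1) α),
      y ∈ Ico (α - 1) α ∧ ∀ i : ℕ, g (y + (K + i + 1))⁻¹ = u y := by
  rw [ae_restrict_iff' measurableSet_Icc] at hg ⊢
  have hbranch : ∀ i : ℕ, ∀ᵐ y, y ∈ Ico (α - 1) α → g (y + (K + i + 1))⁻¹ = u y := by
    intro i
    filter_upwards [ae_comp_inv_add hg (K + i + 1)] with y hy hyI
    have hα' : 0 < 1 / α := one_div_pos.2 hα.1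
    have hpos : 1 / α < y + (K + i + 1) := by
      linarith [hyI.1, hα.1, (Nat.cast_nonneg i : (0 : ℝ) ≤ i)]
    have hT : T α (y + (K + i + 1))⁻¹ = y := by
      simpa using T_inv_add_intCast (j := K + i + 1) hyI (by push_cast; linarith)
    have hmem : (y + (K + i + 1))⁻¹ ∈ Icc (α - 1) α :=
      ⟨by linarith [inv_pos.2 (hα'.trans hpos), hα.2], by simpa using inv_anti₀ hα' hpos.le⟩
    rw [hy hmem, hT]
  filter_upwards [ae_all_iff.2 hbranch, Measure.ae_ne volume α] with y hy hyα hyI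
  have hyI' : y ∈ Ico (α - 1) α := ⟨hyI.1, lt_of_le_of_ne hyI.2 hyα⟩
  exact ⟨hyI', fun i => hy i hyI'⟩

theorem eq_of_eVariationOn_le_rpow {α δ : ℝ} (hα : 0 < α) (hδ : δ < 1) {K : ℕ} (hK : 1 / α < K)
    {g u : ℝ → ℝ} {C : ℝ≥0∞} (hC : C ≠ ⊤)
    (hvar : ∀ k : ℕ, K ≤ k →
      eVariationOn g (Icc (1 / (k + α)) α) ≤ C * ENNReal.ofReal ((k : ℝ) ^ δ))
    {a b : ℝ} (ha : a ∈ Ico (α - 1) α) (hb : b ∈ Ico (α - 1) α)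
    (hga : ∀ i : ℕ, g (a + (K + i + 1))⁻¹ = u a) (hgb : ∀ i : ℕ, g (b + (K + i + 1))⁻¹ = u b) :
    u a = u b := by
  -- `[c (i + 1), c i]` is the `(K + i + 1)`-th cylinder
  set c : ℕ → ℝ := fun i => (K + i + α)⁻¹ with hc_def
  have hc : Antitone c := fun i j hij => inv_anti₀ (by positivity) (by gcongr)
  have hmem : ∀ y ∈ Ico (α - 1) α, ∀ i : ℕ, (y + (K + i + 1))⁻¹ ∈ Icc (c (i + 1)) (c i) := by
    intro y hy i
    refine ⟨inv_anti₀ (by linarith [hy.1, (Nat.cast_nonneg i : (0 : ℝ) ≤ i)]) ?_,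
      inv_anti₀ (by positivity) (by linarith [hy.1])⟩
    push_cast
    linarith [hy.2]
  have hsub : ∀ n : ℕ, Icc (c n) (c 0) ⊆ Icc (1 / ((K + n : ℕ) + α)) α := by
    intro n
    refine Icc_subset_Icc (by simp [hc_def, add_assoc]) ?_
    simpa [hc_def] using inv_anti₀ (one_div_pos.2 hα) (by linarith : 1 / α ≤ K + α)
  have hlin : ∀ n : ℕ, n * dist (u a) (u b) ≤ C.toReal * (K + n) ^ δ := by
    intro n
    have hd := nat_mul_le_eVariationOn_Icc g hc
      (fun i => ⟨_, hmem a ha i, _, hmem b hb i, by rw [hga, hgb]⟩) n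
    have h := ((hd.trans (eVariationOn.mono g (hsub n))).trans
      (hvar (K + n) (Nat.le_add_right K n)))
    rw [edist_dist] at h
    have := ENNReal.toReal_mono (by finiteness) h
    rwa [ENNReal.toReal_mul, ENNReal.toReal_mul, ENNReal.toReal_ofReal dist_nonneg,
      ENNReal.toReal_ofReal (by positivity), ENNReal.toReal_natCast, Nat.cast_add] at this
  exact dist_le_zero.1 (nonpos_of_forall_nat_mul_le_rpow hδ hlin)

theorem exists_ae_eq_const_of_eVariationOn_le_rpow {α δ : ℝ} (hα : α ∈ Ioo 0 1) (hδ : δ < 1) {K : ℕ}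
    (hK : 1 / α < K) {g u : ℝ → ℝ}
    (hg : ∀ᵐ x ∂volume.restrict (Icc (α - 1) α), g x = u (T α x)) {C : ℝ≥0∞} (hC : C ≠ ⊤)
    (hvar : ∀ k : ℕ, K ≤ k →
      eVariationOn g (Icc (1 / (k + α)) α) ≤ C * ENNReal.ofReal ((k : ℝ) ^ δ)) :
    ∃ c, ∀ᵐ x ∂volume.restrict (Icc (α - 1) α), u x = c :=
  exists_ae_eq_const_of_forall_mem_eq (ae_forall_comp_inv_branch_eq hα hK hg)
    fun _ ha _ hb => eq_of_eVariationOn_le_rpow hα.1 hδ hK hC hvar ha.1 hb.1 ha.2 hb.2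

/-- for `α ∈ (0,1)`, `0 < δ < 1` and `K` large, if `u ∈ B_{K,δ}` is
real-valued and `u ∘ T_α ∈ B_{K,δ}`, then `u` is constant a.e.; in particular the
cohomological equation `f = u - u ∘ T_α` with `f, u ∈ B_{K,δ}` forces `f` to be a.e.
constant. -/
theorem BKdelta_cohomological (α : ℝ) (hα : α ∈ Ioo (0:ℝ) 1)
    (δ : ℝ) (hδ : δ ∈ Ioo (0:ℝ) 1) (K : ℕ) (hK : max (1 / α) (1 / (1 - α)) < K) :
    (∀ u : ℝ → ℝ, kdNorm α K δ u ≠ ⊤ → kdNorm α K δ (u ∘ T α) ≠ ⊤ →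
      ∃ c : ℝ, ∀ᵐ x ∂(volume.restrict (Icc (α - 1) α)), u x = c) ∧
    (∀ f u : ℝ → ℝ, kdNorm α K δ f ≠ ⊤ → kdNorm α K δ u ≠ ⊤ →
      (∀ᵐ x ∂(volume.restrict (Icc (α - 1) α)), f x = u x - u (T α x)) →
      ∃ c : ℝ, ∀ᵐ x ∂(volume.restrict (Icc (α - 1) α)), f x = c) := by
  have hKα : 1 / α < K := (le_max_left _ _).trans_lt hK
  have hvar (g : ℝ → ℝ) (k : ℕ) (hk : K ≤ k) :
      eVariationOn g (Icc (1 / (k + α)) α) ≤ kdNorm α K δ g * ENNReal.ofReal ((k : ℝ) ^ δ) := by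
    have hK0 : 0 < K := by exact_mod_cast (one_div_pos.2 hα.1).trans hKα
    exact eVariationOn_le_kdNorm_mul α δ hk (hK0.trans_le hk).ne' g
  refine ⟨fun u _ huT => exists_ae_eq_const_of_eVariationOn_le_rpow hα hδ.2 hKα
    (ae_of_all _ fun _ => rfl) huT (hvar _), fun f u hf hu hfu => ?_⟩
  obtain ⟨c, hc⟩ := exists_ae_eq_const_of_eVariationOn_le_rpow hα hδ.2 hKα (g := u - f) (u := u)
    (by filter_upwards [hfu] with x hx; simp [hx]) (ENNReal.add_ne_top.2 ⟨hu, hf⟩)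
    fun k hk => (eVariationOn_sub_le u f _).trans (by rw [add_mul]; gcongr <;> exact hvar _ k hk)
  have hcT : ∀ᵐ x ∂volume.restrict (Icc (α - 1) α), u (T α x) = c :=
    ae_restrict_of_ae (ae_comp_T_of_ae_restrict hc)
  exact ⟨0, by filter_upwards [hfu, hc, hcT] with x h1 h2 h3; rw [h1, h2, h3, sub_self]⟩
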